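/- Let T : R^n → R^n with fixed point v*, H a positive definite diagonal matrix, and Ω a random diagonal matrix whose diagonal blocks are each either the identity or zero, with E[Ω] = Ω̄ ≻ 0 and with minimum activation probability p_min = min over blocks of P(block active). Suppose ‖Tv - v*‖²_H ≤ (1/(1+η))‖v - v*‖²_H for all v. Then the random iterate v⁺ = v + Ω(Tv - v) satisfies E‖v⁺ - v*‖²_{H Ω̄^{-1}} ≤ (1 - p_min·η/(1+η))‖v - v*‖²_{H Ω̄^{-1}}. -/

import Mathlib

open Matrix Finset

/-! Since each activation `d` satisfies `d² = d`, the expected squared `HΩ̄⁻¹`-norm of the step is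
`‖v - v*‖²_{HΩ̄⁻¹} + ‖Tv - v*‖²_H - ‖v - v*‖²_H`: the cross and quadratic terms are weighted by the
mean activation, which `Ω̄⁻¹` cancels. The contraction bounds the difference by
`-η/(1+η) ‖v - v*‖²_H`, and `Ω̄⁻¹ ⪯ p_min⁻¹ I` gives `‖v - v*‖²_H ≥ p_min ‖v - v*‖²_{HΩ̄⁻¹}`. -/

theorem IsIdempotentElem.add_mul_sq {R : Type*} [CommRing R] {d : R} (hd : IsIdempotentElem d)
    (e r : R) : (e + d * r) ^ 2 = e ^ 2 + d * ((e + r) ^ 2 - e ^ 2) := by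
  linear_combination r ^ 2 * hd.eq

theorem Matrix.sum_smul_diagonal {n R ι : Type*} [DecidableEq n] [Semiring R] [Fintype ι]
    (c : ι → R) (d : ι → n → R) :
    ∑ ω, c ω • diagonal (d ω) = diagonal (∑ ω, c ω • d ω) := by
  simp only [← diagonal_smul]
  exact (map_sum (diagonalAddMonoidHom n R) _ _).symm

section DiagonalQuadraticForm

variable {n : Type*} [Fintype n] [DecidableEq n]

theorem Matrix.dotProduct_diagonal_mulVec_self {R : Type*} [CommSemiring R] (w x : n → R) :
    x ⬝ᵥ diagonal w *ᵥ x = ∑ i, w i * x i ^ 2 := by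
  simp only [dotProduct, mulVec_diagonal]
  exact sum_congr rfl fun i _ => by ring

theorem Matrix.inv_diagonal_of_ne_zero {K : Type*} [Field K] {v : n → K} (hv : ∀ i, v i ≠ 0) :
    (diagonal v)⁻¹ = diagonal v⁻¹ := by
  refine inv_eq_right_inv ?_
  rw [diagonal_mul_diagonal, ← diagonal_one]
  exact congrArg diagonal (funext fun i => mul_inv_cancel₀ (hv i))

theorem Matrix.mul_dotProduct_diagonal_div_le {p w : n → ℝ} {c : ℝ} (hw : ∀ i, 0 ≤ w i)
    (hp : ∀ i, 0 < p i) (hc : ∀ i, c ≤ p i) (x : n → ℝ) :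
    c * (x ⬝ᵥ diagonal (w / p) *ᵥ x) ≤ x ⬝ᵥ diagonal w *ᵥ x := by
  simp only [dotProduct_diagonal_mulVec_self, mul_sum, Pi.div_apply]
  refine sum_le_sum fun i _ => ?_
  have hwx : 0 ≤ w i / p i * x i ^ 2 := mul_nonneg (div_nonneg (hw i) (hp i).le) (sq_nonneg _)
  calc c * (w i / p i * x i ^ 2) ≤ p i * (w i / p i * x i ^ 2) := by gcongr; exact hc i
    _ = w i * x i ^ 2 := by field_simp [(hp i).ne']

theorem expected_dotProduct_diagonal_add_mul {R ι : Type*} [CommRing R] [Fintype ι]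
    (prob : ι → R) (hsum : ∑ ω, prob ω = 1) (d : ι → n → R)
    (hd : ∀ ω i, IsIdempotentElem (d ω i)) (w e r : n → R) :
    ∑ ω, prob ω * ((e + d ω * r) ⬝ᵥ diagonal w *ᵥ (e + d ω * r)) =
      e ⬝ᵥ diagonal w *ᵥ e +
        ((e + r) ⬝ᵥ diagonal (w * ∑ ω, prob ω • d ω) *ᵥ (e + r) -
          e ⬝ᵥ diagonal (w * ∑ ω, prob ω • d ω) *ᵥ e) := by
  simp only [dotProduct_diagonal_mulVec_self, ← sum_sub_distrib, ← sum_add_distrib]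
  conv_lhs => simp only [mul_sum]
  rw [sum_comm]
  refine sum_congr rfl fun i _ => ?_
  simp only [Pi.add_apply, Pi.mul_apply, (hd _ i).add_mul_sq, Finset.sum_apply, Pi.smul_apply,
    smul_eq_mul]
  calc ∑ ω, prob ω * (w i * (e i ^ 2 + d ω i * ((e i + r i) ^ 2 - e i ^ 2)))
      = (∑ ω, prob ω) * (w i * e i ^ 2) +
          (∑ ω, prob ω * d ω i) * (w i * ((e i + r i) ^ 2 - e i ^ 2)) := by
        rw [sum_mul, sum_mul, ← sum_add_distrib]
        exact sum_congr rfl fun ω _ => by ring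
    _ = _ := by rw [hsum]; ring

end DiagonalQuadraticForm

theorem asynchronous_linear_convergence_general {n : ℕ}
    {ι : Type*} [Fintype ι]
    (prob : ι → ℝ) (hsum : ∑ ω, prob ω = 1)
    (d : ι → Fin n → ℝ) (hd : ∀ ω i, d ω i = 0 ∨ d ω i = 1)
    (Ω : ι → Matrix (Fin n) (Fin n) ℝ)
    (hΩ : ∀ ω, Ω ω = Matrix.diagonal (d ω))
    (Ωbar : Matrix (Fin n) (Fin n) ℝ)
    (hΩbar : Ωbar = ∑ ω, prob ω • Ω ω)
    (pmin : ℝ) (hpmin_pos : 0 < pmin)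
    (hpmin_le : ∀ i, pmin ≤ ∑ ω, prob ω * d ω i)
    (Hd : Fin n → ℝ) (hHd : ∀ i, 0 < Hd i)
    (T : (Fin n → ℝ) → (Fin n → ℝ)) (vstar : Fin n → ℝ)
    (η : ℝ) (hη : 0 < η)
    (hcontract : ∀ v,
      (T v - vstar) ⬝ᵥ (Matrix.diagonal Hd).mulVec (T v - vstar) ≤
        (1 / (1 + η)) * ((v - vstar) ⬝ᵥ (Matrix.diagonal Hd).mulVec (v - vstar)))
    (v : Fin n → ℝ) :
    ∑ ω, prob ω *
        ((v + (Ω ω).mulVec (T v - v) - vstar) ⬝ᵥ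
          ((Matrix.diagonal Hd) * Ωbar⁻¹).mulVec
            (v + (Ω ω).mulVec (T v - v) - vstar)) ≤
      (1 - pmin * η / (1 + η)) *
        ((v - vstar) ⬝ᵥ ((Matrix.diagonal Hd) * Ωbar⁻¹).mulVec (v - vstar)) := by
  set p := ∑ ω, prob ω • d ω
  have hpmin_le_p : ∀ i, pmin ≤ p i := by simpa [p, Finset.sum_apply] using hpmin_le
  have hp : ∀ i, 0 < p i := fun i => hpmin_pos.trans_le (hpmin_le_p i)
  have hM : diagonal Hd * Ωbar⁻¹ = diagonal (Hd / p) := by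
    rw [hΩbar, funext hΩ, sum_smul_diagonal, inv_diagonal_of_ne_zero fun i => (hp i).ne',
      diagonal_mul_diagonal]
    rfl
  have hHp : Hd / p * p = Hd := funext fun i => div_mul_cancel₀ _ (hp i).ne'
  have hiterate : ∀ ω, v + Ω ω *ᵥ (T v - v) - vstar = (v - vstar) + d ω * (T v - v) := by
    intro ω
    ext i
    simp only [hΩ, Pi.add_apply, Pi.sub_apply, Pi.mul_apply, mulVec_diagonal]
    ring
  have hd_idem : ∀ ω i, IsIdempotentElem (d ω i) := fun ω i => by
    rcases hd ω i with h | h <;> simp [h, IsIdempotentElem]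
  simp only [hM, hiterate]
  rw [expected_dotProduct_diagonal_add_mul prob hsum d hd_idem, hHp, sub_add_sub_cancel']
  set A := (v - vstar) ⬝ᵥ diagonal (Hd / p) *ᵥ (v - vstar)
  set Q := (v - vstar) ⬝ᵥ diagonal Hd *ᵥ (v - vstar)
  have hAQ : pmin * A ≤ Q :=
    mul_dotProduct_diagonal_div_le (fun i => (hHd i).le) hp hpmin_le_p _
  calc A + ((T v - vstar) ⬝ᵥ diagonal Hd *ᵥ (T v - vstar) - Q)
      ≤ A + (1 / (1 + η) * Q - Q) := by gcongr; exact hcontract v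
    _ = A - η / (1 + η) * Q := by field_simp; ring
    _ ≤ A - η / (1 + η) * (pmin * A) := by gcongr
    _ = (1 - pmin * η / (1 + η)) * A := by ring

/-- Asynchronous linear convergence: with a random block-diagonal activation
matrix `Ω` (each diagonal entry `0` or `1`), mean activation `Ω̄ = E[Ω] ≻ 0`
with minimum activation probability `pmin`, a positive diagonal matrix `H`,
and a map `T` with fixed point `v*` contracting in `‖·‖²_H` with factor
`1/(1+η)`, the random iterate `v⁺ = v + Ω(Tv - v)` satisfies
`E‖v⁺ - v*‖²_{HΩ̄⁻¹} ≤ (1 - pmin η/(1+η))‖v - v*‖²_{HΩ̄⁻¹}`. -/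
theorem asynchronous_linear_convergence {n : ℕ} [NeZero n]
    {ι : Type*} [Fintype ι] [Nonempty ι]
    (prob : ι → ℝ) (hprob : ∀ ω, 0 ≤ prob ω) (hsum : ∑ ω, prob ω = 1)
    (d : ι → Fin n → ℝ) (hd : ∀ ω i, d ω i = 0 ∨ d ω i = 1)
    (Ω : ι → Matrix (Fin n) (Fin n) ℝ)
    (hΩ : ∀ ω, Ω ω = Matrix.diagonal (d ω))
    (Ωbar : Matrix (Fin n) (Fin n) ℝ)
    (hΩbar : Ωbar = ∑ ω, prob ω • Ω ω)
    (pmin : ℝ) (hpmin_pos : 0 < pmin)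
    (hpmin_le : ∀ i, pmin ≤ ∑ ω, prob ω * d ω i)
    (hpmin_min : ∃ i, pmin = ∑ ω, prob ω * d ω i)
    (Hd : Fin n → ℝ) (hHd : ∀ i, 0 < Hd i)
    (T : (Fin n → ℝ) → (Fin n → ℝ)) (vstar : Fin n → ℝ)
    (hfix : T vstar = vstar)
    (η : ℝ) (hη : 0 < η)
    (hcontract : ∀ v,
      (T v - vstar) ⬝ᵥ (Matrix.diagonal Hd).mulVec (T v - vstar) ≤
        (1 / (1 + η)) * ((v - vstar) ⬝ᵥ (Matrix.diagonal Hd).mulVec (v - vstar)))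
    (v : Fin n → ℝ) :
    ∑ ω, prob ω *
        ((v + (Ω ω).mulVec (T v - v) - vstar) ⬝ᵥ
          ((Matrix.diagonal Hd) * Ωbar⁻¹).mulVec
            (v + (Ω ω).mulVec (T v - v) - vstar)) ≤
      (1 - pmin * η / (1 + η)) *
        ((v - vstar) ⬝ᵥ ((Matrix.diagonal Hd) * Ωbar⁻¹).mulVec (v - vstar)) :=
  asynchronous_linear_convergence_general prob hsum d hd Ω hΩ Ωbar hΩbar pmin hpmin_pos hpmin_le Hd
    hHd T vstar η hη hcontract v
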